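/- arXiv:1810.11664 — 3 statements merged into one kernel-verified Lean document; each statement's English description precedes it below -/
import Mathlib

section
/- Let $\rho_n = \exp(-1/(n\gamma))$ for $\gamma > 0$. Then $\lim_{n\to\infty} \frac{1-\exp(-2/(n\gamma))}{(1-\exp(-1/(n\gamma)))\,(n-(n-2)\exp(-1/(n\gamma)))} = \frac{2\gamma}{2\gamma+1}$. -/
/-!
Write `q = exp (-1 / (n γ))`. Since `1 - q² = (1 - q)(1 + q)`, the quotient equals
`(1 + q) / (n (1 - q) + 2 q)`. As `n → ∞`, `q → 1`, and `n (1 - q) → 1 / γ` because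
`exp' 0 = 1`; so the quotient tends to `2 / (1 / γ + 2) = 2 γ / (2 γ + 1)`.
-/

open Filter Real Topology

theorem tendsto_natCast_mul_one_sub_exp_neg_div (c : ℝ) :
    Tendsto (fun n : ℕ => (n : ℝ) * (1 - exp (-c / n))) atTop (𝓝 c) := by
  rcases eq_or_ne c 0 with rfl | hc
  · simp
  have hstep : Tendsto (fun n : ℕ => -c / n) atTop (𝓝[≠] 0) := by
    refine tendsto_nhdsWithin_iff.mpr ⟨tendsto_const_div_atTop_nhds_zero_nat (-c), ?_⟩
    filter_upwards [eventually_ne_atTop 0] with n hn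
    simpa [hc] using hn
  have hslope := ((hasDerivAt_exp 0).tendsto_slope_zero.comp hstep).const_mul c
  simp only [zero_add, exp_zero, smul_eq_mul, mul_one] at hslope
  refine hslope.congr' ?_
  filter_upwards [eventually_ne_atTop 0] with n hn
  simp only [Function.comp_apply]
  field_simp
  ring

theorem one_sub_sq_div_mul_eq {K : Type*} [Field K] (n q : K) (hq : q ≠ 1) :
    (1 - q ^ 2) / ((1 - q) * (n - (n - 2) * q)) = (1 + q) / (n * (1 - q) + 2 * q) := by
  rw [show 1 - q ^ 2 = (1 - q) * (1 + q) by ring, show n - (n - 2) * q = n * (1 - q) + 2 * q by ring,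
    mul_div_mul_left _ _ (sub_ne_zero.mpr hq.symm)]

theorem stmt_0 (γ : ℝ) (hγ : 0 < γ) :
    Filter.Tendsto (fun n : ℕ =>
      (1 - Real.exp (-2 / (n * γ))) /
        ((1 - Real.exp (-1 / (n * γ))) * ((n : ℝ) - ((n : ℝ) - 2) * Real.exp (-1 / (n * γ)))))
      Filter.atTop (nhds (2 * γ / (2 * γ + 1))) := by
  have hq : Tendsto (fun n : ℕ => exp (-γ⁻¹ / n)) atTop (𝓝 1) := by
    simpa using (tendsto_const_div_atTop_nhds_zero_nat (-γ⁻¹)).rexp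
  have hlim := (tendsto_const_nhds (x := (1 : ℝ)).add hq).div
    ((tendsto_natCast_mul_one_sub_exp_neg_div γ⁻¹).add (hq.const_mul 2)) (by positivity)
  rw [show 2 * γ / (2 * γ + 1) = (1 + 1) / (γ⁻¹ + 2 * 1) by field_simp; ring]
  refine hlim.congr' ?_
  filter_upwards [eventually_ne_atTop 0] with n hn
  have hq_ne : exp (-γ⁻¹ / n) ≠ 1 := by
    rw [Ne, exp_eq_one_iff]
    simp [hγ.ne', hn]
  rw [show -2 / (n * γ) = ((2 : ℕ) : ℝ) * (-γ⁻¹ / n) by push_cast; ring,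
    show -1 / (n * γ) = -γ⁻¹ / n by ring, exp_nat_mul, one_sub_sq_div_mul_eq _ _ hq_ne]
  rfl
end

section
/- Let $\mathbf{P}$ and $\tilde{\boldsymbol\Sigma}_1,\dots,\tilde{\boldsymbol\Sigma}_k$ be symmetric positive definite $n\times n$ matrices, and let $\boldsymbol\Lambda$ be the $kn\times kn$ block diagonal matrix with blocks $\tilde{\boldsymbol\Sigma}_l$. Then $\det\left(\mathbf{1}_k\mathbf{1}_k^T \otimes \mathbf{P} + \boldsymbol\Lambda\right) = \det(\mathbf{P})\cdot\det(\hat{\boldsymbol\Sigma})^{-1}\cdot\prod_{l=1}^k \det(\tilde{\boldsymbol\Sigma}_l)$, where $\hat{\boldsymbol\Sigma} = (\sum_{l=1}^k \tilde{\boldsymbol\Sigma}_l^{-1} + \mathbf{P}^{-1})^{-1}$ and $\otimes$ is the Kronecker product. -/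
/-!
Write `J ⊗ P` for the matrix with every block equal to `P`. It factors as `U P Uᵀ`, where
`U = [I; …; I]` stacks `k` identity blocks, so the matrix determinant lemma gives
`det (Λ + U P Uᵀ) = det Λ · det (1 + P Uᵀ Λ⁻¹ U)`. Since `Λ` is block diagonal,
`Uᵀ Λ⁻¹ U = ∑ₗ Σₗ⁻¹` and `det Λ = ∏ₗ det Σₗ`; finally
`det (1 + P ∑ₗ Σₗ⁻¹) = det P · det (P⁻¹ + ∑ₗ Σₗ⁻¹)`.
-/

open Matrix

namespace Matrix

def stackedOne (m ι R : Type*) [DecidableEq m] [Zero R] [One R] : Matrix (m × ι) m R :=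
  (1 : Matrix m m R).submatrix Prod.fst id

variable {m R : Type*} [Fintype m] [DecidableEq m] [CommRing R]

theorem stackedOne_mul_mul_transpose (ι : Type*) (P : Matrix m m R) :
    stackedOne m ι R * P * (stackedOne m ι R)ᵀ = P.submatrix Prod.fst Prod.fst := by
  ext p q
  simp [stackedOne, mul_apply, one_apply]

variable {ι : Type*} [Fintype ι] [DecidableEq ι]

theorem inv_blockDiagonal (S : ι → Matrix m m R) (hS : ∀ l, IsUnit (S l).det) :
    (blockDiagonal S)⁻¹ = blockDiagonal fun l => (S l)⁻¹ := by
  refine inv_eq_right_inv ?_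
  rw [← blockDiagonal_mul, ← blockDiagonal_one]
  exact congrArg blockDiagonal (funext fun l => mul_nonsing_inv _ (hS l))

theorem transpose_stackedOne_mul_blockDiagonal_mul (T : ι → Matrix m m R) :
    (stackedOne m ι R)ᵀ * blockDiagonal T * stackedOne m ι R = ∑ l, T l := by
  ext i j
  simp [stackedOne, mul_apply, one_apply, blockDiagonal_apply, sum_apply,
    Fintype.sum_prod_type]

theorem det_blockDiagonal_add_submatrix_fst (S : ι → Matrix m m R)
    (hS : ∀ l, IsUnit (S l).det) (P : Matrix m m R) :
    (blockDiagonal S + P.submatrix Prod.fst Prod.fst).det =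
      (∏ l, (S l).det) * (1 + P * ∑ l, (S l)⁻¹).det := by
  have hdet : IsUnit (blockDiagonal S).det := by
    rw [det_blockDiagonal]
    exact IsUnit.prod_univ_iff.mpr hS
  rw [← stackedOne_mul_mul_transpose ι, Matrix.mul_assoc,
    det_add_mul _ _ hdet, det_blockDiagonal, inv_blockDiagonal S hS,
    ← transpose_stackedOne_mul_blockDiagonal_mul]
  simp only [Matrix.mul_assoc]

end Matrix

theorem stmt_12 (n k : ℕ) (P : Matrix (Fin n) (Fin n) ℝ) (hP : P.PosDef)
    (S : Fin k → Matrix (Fin n) (Fin n) ℝ) (hS : ∀ l, (S l).PosDef)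
    (Λ : Matrix (Fin k × Fin n) (Fin k × Fin n) ℝ)
    (hΛ : ∀ p q, Λ p q = if p.1 = q.1 then S p.1 p.2 q.2 else 0) :
    (Matrix.of (fun p q : Fin k × Fin n => P p.2 q.2) + Λ).det =
      P.det * ((∑ l, (S l)⁻¹ + P⁻¹)⁻¹.det)⁻¹ * ∏ l, (S l).det := by
  have hPdet : IsUnit P.det := (isUnit_iff_isUnit_det P).mp hP.isUnit
  have hreindex : Matrix.of (fun p q : Fin k × Fin n => P p.2 q.2) + Λ =
      reindex (Equiv.prodComm _ _) (Equiv.prodComm _ _)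
        (blockDiagonal S + P.submatrix Prod.fst Prod.fst) := by
    ext p q
    simp [hΛ, blockDiagonal_apply, add_comm]
  have hfactor : 1 + P * ∑ l, (S l)⁻¹ = P * (∑ l, (S l)⁻¹ + P⁻¹) := by
    rw [Matrix.mul_add, mul_nonsing_inv _ hPdet, add_comm]
  have hSdet : ∀ l, IsUnit (S l).det := fun l => (isUnit_iff_isUnit_det _).mp (hS l).isUnit
  rw [hreindex, det_reindex_self, det_blockDiagonal_add_submatrix_fst S hSdet P, hfactor,
    det_mul, det_nonsing_inv, Ring.inverse_eq_inv', inv_inv]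
  ring
end

section
/- Let $\gamma > 0$ and define $g(n) = \frac{1-e^{-2/(n\gamma)}}{(1-e^{-1/(n\gamma)})(n-(n-2)e^{-1/(n\gamma)})}$ for integers $n \ge 2$. Then $g(n) > 0$ for all $n \ge 2$ and $\inf_{n\ge 2} g(n) > 0$; in particular $\tau^2 g(n)$, the variance of the generalized least squares mean estimator, is bounded away from $0$ uniformly in $n$, so the estimator is not consistent as $n \to \infty$. -/
/-! Writing `u = exp (-1 / (n γ))`, the factor `1 - u` cancels and `g(n) = (1 + u) / (n (1 - u) + 2 u)`.
Since `1 - u ≤ 1 / (n γ)`, the denominator is at most `1 / γ + 2` while the numerator is at least `1`,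
so `g(n) ≥ γ / (2 γ + 1)` for every `n`. -/

open Real

/-- `g` of the statement at a real argument: `(1ᵀ R⁻¹ 1)⁻¹` for the exponential kernel with range `γ`
on `t` equally spaced points of `[0, 1]`. -/
noncomputable def expKernelGLSVariance (γ t : ℝ) : ℝ :=
  (1 - exp (-2 / (t * γ))) / ((1 - exp (-1 / (t * γ))) * (t - (t - 2) * exp (-1 / (t * γ))))

lemma mul_one_sub_exp_neg_div_le {a t : ℝ} (ht : 0 < t) : t * (1 - exp (-a / t)) ≤ a :=
  calc t * (1 - exp (-a / t)) ≤ t * (a / t) := by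
        gcongr
        linarith [add_one_le_exp (-a / t), neg_div t a]
    _ = a := mul_div_cancel₀ a ht.ne'

lemma exp_neg_one_div_lt_one {x : ℝ} (hx : 0 < x) : exp (-1 / x) < 1 :=
  exp_lt_one_iff.mpr (div_neg_of_neg_of_pos (by norm_num) hx)

lemma expKernelGLSVariance_eq {γ t : ℝ} (hγ : 0 < γ) (ht : 0 < t) :
    expKernelGLSVariance γ t =
      (1 + exp (-1 / (t * γ))) / (t * (1 - exp (-1 / (t * γ))) + 2 * exp (-1 / (t * γ))) := by
  set u := exp (-1 / (t * γ))
  have hu : u < 1 := exp_neg_one_div_lt_one (mul_pos ht hγ)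
  have hexp_two : exp (-2 / (t * γ)) = u ^ 2 := by
    rw [← exp_nat_mul]
    congr 1
    ring
  rw [expKernelGLSVariance, hexp_two,
    show 1 - u ^ 2 = (1 - u) * (1 + u) by ring, show t - (t - 2) * u = t * (1 - u) + 2 * u by ring,
    mul_div_mul_left _ _ (sub_ne_zero.mpr hu.ne')]

lemma div_two_mul_add_one_le_expKernelGLSVariance {γ t : ℝ} (hγ : 0 < γ) (ht : 0 < t) :
    γ / (2 * γ + 1) ≤ expKernelGLSVariance γ t := by
  rw [expKernelGLSVariance_eq hγ ht]
  set u := exp (-1 / (t * γ))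
  have hu₀ : 0 < u := exp_pos _
  have hu₁ : u < 1 := exp_neg_one_div_lt_one (mul_pos ht hγ)
  have hdecay : t * (1 - u) ≤ 1 / γ := by
    have : -1 / (t * γ) = -(1 / γ) / t := by field_simp
    simpa only [u, this] using mul_one_sub_exp_neg_div_le (a := 1 / γ) ht
  have hden_pos : 0 < t * (1 - u) + 2 * u := by nlinarith
  calc γ / (2 * γ + 1) = 1 / (1 / γ + 2) := by field_simp; ring
    _ ≤ (1 + u) / (t * (1 - u) + 2 * u) := div_le_div₀ (by linarith) (by linarith) hden_pos
        (by linarith)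

theorem stmt_18 (γ : ℝ) (hγ : 0 < γ) :
    (∀ n : ℕ, 2 ≤ n →
      0 < (1 - Real.exp (-2 / (n * γ))) /
        ((1 - Real.exp (-1 / (n * γ))) * ((n : ℝ) - ((n : ℝ) - 2) * Real.exp (-1 / (n * γ))))) ∧
    ∃ c : ℝ, 0 < c ∧ ∀ n : ℕ, 2 ≤ n →
      c ≤ (1 - Real.exp (-2 / (n * γ))) /
        ((1 - Real.exp (-1 / (n * γ))) * ((n : ℝ) - ((n : ℝ) - 2) * Real.exp (-1 / (n * γ)))) := by
  have hc : 0 < γ / (2 * γ + 1) := by positivity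
  have hbound (n : ℕ) (hn : 2 ≤ n) : γ / (2 * γ + 1) ≤ expKernelGLSVariance γ n :=
    div_two_mul_add_one_le_expKernelGLSVariance hγ (Nat.cast_pos.mpr (by omega))
  exact ⟨fun n hn => hc.trans_le (hbound n hn), _, hc, hbound⟩
end
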